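/- Define the (one-step, deterministic-kernel abstraction of the) stopping region: let v : Fin (N+1) → (Fin d → ℝ) → ℝ and φ : (Fin d → ℝ) → ℝ satisfy (i) v(t,s) ≥ φ(s) for all (t,s); (ii) φ(s) = (max_i s_i − K)⁺; (iii) for all λ ≥ 1 and all (t,s), v(t, λ s) ≤ λ v(t,s) + (λ−1) K. Then the stopping region S := {(t,s) : v(t,s) = φ(s)} is closed under scaling by λ ≥ 1 on the set where φ(s) > 0: if (t,s) ∈ S and max_i s_i > K and λ ≥ 1, then (t, λ s) ∈ S. -/

import Mathlib

theorem stopping_region_scaling_closed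
    (N d : ℕ) (hd : 0 < d) (K : ℝ) (hK : 0 ≤ K)
    (v : ℕ → (Fin d → ℝ) → ℝ)
    (φ : (Fin d → ℝ) → ℝ)
    (hφ : ∀ s : Fin d → ℝ,
      φ s = max ((Finset.univ.sup' ⟨⟨0, hd⟩, Finset.mem_univ _⟩ s) - K) 0)
    (hdom : ∀ t ≤ N, ∀ s : Fin d → ℝ, (∀ i, 0 ≤ s i) → φ s ≤ v t s)
    (hsub : ∀ l : ℝ, 1 ≤ l → ∀ t ≤ N, ∀ s : Fin d → ℝ, (∀ i, 0 ≤ s i) →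
      v t (l • s) ≤ l * v t s + (l - 1) * K) :
    ∀ t ≤ N, ∀ s : Fin d → ℝ, (∀ i, 0 ≤ s i) →
      v t s = φ s →
      K < Finset.univ.sup' ⟨⟨0, hd⟩, Finset.mem_univ _⟩ s →
      ∀ l : ℝ, 1 ≤ l → v t (l • s) = φ (l • s) := by
  intro t ht s hs hstop hM l hl
  have hne : (Finset.univ : Finset (Fin d)).Nonempty := ⟨⟨0, hd⟩, Finset.mem_univ _⟩
  set M := Finset.univ.sup' ⟨⟨0, hd⟩, Finset.mem_univ _⟩ s with hMdef
  have hl0 : 0 ≤ l := le_trans zero_le_one hl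
  have hsup : Finset.univ.sup' ⟨⟨0, hd⟩, Finset.mem_univ _⟩ (l • s) = l * M := by
    rw [hMdef]
    rw [show (l • s : Fin d → ℝ) = (fun x => l * x) ∘ s from rfl]
    refine (Finset.comp_sup'_eq_sup'_comp _ (fun x => l * x) ?_).symm
    intro x y
    exact mul_max_of_nonneg x y hl0
  have hMK : M ≤ l * M := le_mul_of_one_le_left (le_trans hK (le_of_lt hM)) hl
  have hφs : φ s = M - K := by
    rw [hφ]; exact max_eq_left (by linarith)
  have hφls : φ (l • s) = l * M - K := by
    rw [hφ, hsup]; exact max_eq_left (by nlinarith)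
  have hls : ∀ i, 0 ≤ (l • s) i := fun i => mul_nonneg hl0 (hs i)
  have h1 : φ (l • s) ≤ v t (l • s) := hdom t ht _ hls
  have h2 : v t (l • s) ≤ l * v t s + (l - 1) * K := hsub l hl t ht s hs
  rw [hstop, hφs] at h2
  rw [hφls] at h1 ⊢
  linarith
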